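/- arXiv:1711.09051 — 4 statements merged into one kernel-verified Lean document; each statement's English description precedes it below -/
import Mathlib

section
/- Let f, g, h : ℝ → ℝ with h twice differentiable, h' and h'' never zero, f', g' never zero, and suppose that for all u, v, w: -3H₀·h''(w)/(h'(w))² = (h''/h')'(w)·[1 + 1/(f'(u))² + 1/(g'(v))²], where H₀ ≠ 0 and f'' never zero (so 1/(f')² is nonconstant). Then a contradiction follows; i.e., no such functions exist. -/
/-! The factor `1 + 1/f'(u)² + 1/g'(v)²` is not constant in `u` (the derivative of `f'²` is
`2 f' f'' ≠ 0`), while the left-hand side and `(h''/h')'(w)` do not depend on `u`. Hence `(h''/h')' = 0`, and the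
equation collapses to `-3 H₀ h''/h'² = 0`, which is impossible. -/

lemma exists_one_div_sq_ne_of_deriv_ne_zero {φ : ℝ → ℝ} {x : ℝ} (hx : φ x ≠ 0)
    (hx' : deriv φ x ≠ 0) : ∃ y, 1 / φ y ^ 2 ≠ 1 / φ x ^ 2 := by
  by_contra! hconst
  have hsq : (fun y => φ y ^ 2) = fun _ => φ x ^ 2 := by
    funext y
    simpa only [one_div, inv_inj] using hconst y
  have hderiv : HasDerivAt (fun y => φ y ^ 2) (2 * φ x * deriv φ x) x := by
    simpa using (differentiableAt_of_deriv_ne_zero hx').hasDerivAt.fun_pow 2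
  rw [hsq] at hderiv
  have hzero : 2 * φ x * deriv φ x = 0 := hderiv.unique (hasDerivAt_const x _)
  simp [hx, hx'] at hzero

lemma eq_zero_of_forall_eq_mul {α : Type*} {a b : ℝ} {F : α → ℝ} (h : ∀ u, a = b * F u)
    {u₁ u₂ : α} (hF : F u₁ ≠ F u₂) : b = 0 := by
  by_contra hb
  exact hF (mul_left_cancel₀ hb ((h u₁).symm.trans (h u₂)))

theorem stmt_11_general (f g h : ℝ → ℝ) (H₀ : ℝ) (hH₀ : H₀ ≠ 0)
    (hhne : ∀ w, deriv h w ≠ 0) (hhne2 : ∀ w, deriv (deriv h) w ≠ 0)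
    (hfne : ∀ u, deriv f u ≠ 0)
    (hfne2 : ∀ u, deriv (deriv f) u ≠ 0)
    (heq : ∀ u v w : ℝ,
      -3 * H₀ * deriv (deriv h) w / (deriv h w) ^ 2
        = deriv (fun x => deriv (deriv h) x / deriv h x) w
            * (1 + 1 / (deriv f u) ^ 2 + 1 / (deriv g v) ^ 2)) :
    False := by
  obtain ⟨u, hu⟩ := exists_one_div_sq_ne_of_deriv_ne_zero (hfne 0) (hfne2 0)
  have hlog : deriv (fun x => deriv (deriv h) x / deriv h x) 0 = 0 :=
    eq_zero_of_forall_eq_mul (fun u => heq u 0 0) (u₁ := u) (u₂ := 0)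
      (by simpa only [ne_eq, add_left_inj, add_right_inj] using hu)
  have h0 := heq 0 0 0
  rw [hlog, zero_mul] at h0
  simp [hH₀, hhne 0, hhne2 0] at h0

/-- Nonexistence step in the CMC classification of type 3 translation hypersurfaces
in 𝕀⁴. -/
theorem stmt_11 (f g h : ℝ → ℝ) (H₀ : ℝ) (hH₀ : H₀ ≠ 0)
    (hh : Differentiable ℝ h) (hh' : Differentiable ℝ (deriv h))
    (hhne : ∀ w, deriv h w ≠ 0) (hhne2 : ∀ w, deriv (deriv h) w ≠ 0)
    (hfne : ∀ u, deriv f u ≠ 0) (hgne : ∀ v, deriv g v ≠ 0)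
    (hfne2 : ∀ u, deriv (deriv f) u ≠ 0)
    (heq : ∀ u v w : ℝ,
      -3 * H₀ * deriv (deriv h) w / (deriv h w) ^ 2
        = deriv (fun x => deriv (deriv h) x / deriv h x) w
            * (1 + 1 / (deriv f u) ^ 2 + 1 / (deriv g v) ^ 2)) :
    False :=
  stmt_11_general f g h H₀ hH₀ hhne hhne2 hfne hfne2 heq
end

section
/- Let f, g : ℝ → ℝ be twice differentiable and suppose f''(u)·g''(v) = c·(f'(u) - g'(v))⁵ for all u, v, where c ≠ 0, f'' is never zero and g'' is never zero. Then f'''(u)·(f'(u) - g'(v)) - 5(f''(u))² = 0 for all u, v, which forces f'' ≡ 0, a contradiction; hence no such f, g, c exist. -/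
/-- Nonexistence of type 4 translation hypersurfaces in 𝕀⁴ with nonzero constant
Gauss–Kronecker curvature: f''(u)·g''(v) = c·(f'(u)-g'(v))⁵ is impossible. -/
theorem stmt_12 (f g : ℝ → ℝ) (c : ℝ) (hc : c ≠ 0)
    (hf : Differentiable ℝ f) (hf' : Differentiable ℝ (deriv f))
    (hf'' : Differentiable ℝ (deriv (deriv f)))
    (hg : Differentiable ℝ g) (hg' : Differentiable ℝ (deriv g))
    (hfne2 : ∀ u, deriv (deriv f) u ≠ 0) (hgne2 : ∀ v, deriv (deriv g) v ≠ 0)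
    (heq : ∀ u v : ℝ,
      deriv (deriv f) u * deriv (deriv g) v = c * (deriv f u - deriv g v) ^ 5) :
    False := by
  have key : ∀ u v : ℝ, deriv (deriv (deriv f)) u * deriv (deriv g) v
      = c * ((5 : ℝ) * (deriv f u - deriv g v) ^ 4 * deriv (deriv f) u) := by
    intro u v
    have h1 : HasDerivAt (fun u => deriv (deriv f) u * deriv (deriv g) v)
        (deriv (deriv (deriv f)) u * deriv (deriv g) v) u :=
      ((hf'' u).hasDerivAt).mul_const _
    have h2 := ((((hf' u).hasDerivAt).sub_const (deriv g v)).pow 5).const_mul c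
    have hfun : (fun u => deriv (deriv f) u * deriv (deriv g) v)
        = fun u => c * (deriv f u - deriv g v) ^ 5 := funext fun u => heq u v
    rw [hfun] at h1
    have := h1.unique h2
    rw [this]; norm_num
  have key2 : ∀ u v : ℝ,
      deriv (deriv (deriv f)) u * (deriv f u - deriv g v) = 5 * (deriv (deriv f) u) ^ 2 := by
    intro u v
    have h := key u v
    have h2 := heq u v
    have hg2 := hgne2 v
    have h3 : (deriv (deriv (deriv f)) u * (deriv f u - deriv g v)
        - 5 * (deriv (deriv f) u) ^ 2) * deriv (deriv g) v = 0 := by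
      linear_combination (deriv f u - deriv g v) * h - 5 * deriv (deriv f) u * h2
    have := (mul_eq_zero.mp h3).resolve_right hg2
    linarith [this]
  have hAne : deriv (deriv (deriv f)) 0 ≠ 0 := by
    intro h0
    have h2 := key2 0 0
    rw [h0, zero_mul] at h2
    have : deriv (deriv f) 0 ^ 2 = 0 := by linarith
    exact hfne2 0 (by simpa using pow_eq_zero_iff (n := 2) (by norm_num) |>.mp this)
  have hconst : ∀ v, deriv g v = deriv f 0
      - 5 * (deriv (deriv f) 0) ^ 2 / deriv (deriv (deriv f)) 0 := by
    intro v
    have h2 := key2 0 v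
    field_simp
    linear_combination -h2
  have hdg : deriv g = fun _ => deriv f 0
      - 5 * (deriv (deriv f) 0) ^ 2 / deriv (deriv (deriv f)) 0 := funext hconst
  have h0 : deriv (deriv g) 0 = 0 := by rw [hdg]; simp
  exact hgne2 0 h0
end

section
/- Let f, g, h : ℝ → ℝ be sufficiently smooth with f'' never zero, g'' never zero, h'' never zero, h''' never zero, f' - g' never zero, and suppose 2h'(w)h''(w)(f''(u)+g''(v)) - 5h''(w)(f''(u)g'(v) + f'(u)g''(v)) + h'''(w)(f'(u)-g'(v))² = 0 for all u, v, w. Then a contradiction follows (no such functions exist). -/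
/-- If the derivative of `F` at `0` is nonzero, `F` is not constant. -/
lemma nonconst_of_deriv_ne (F : ℝ → ℝ) (h : deriv F 0 ≠ 0) : ∃ a b : ℝ, F a ≠ F b := by
  by_contra hc
  push_neg at hc
  have hF : F = fun _ => F 0 := funext fun x => hc x 0
  rw [hF] at h
  simp at h

/-- Appendix 2 nonexistence: equation (7.2) for minimal type-4 translation
hypersurfaces in 𝕀⁴ is contradictory. -/
theorem stmt_17 (f g h : ℝ → ℝ)
    (hf : ContDiff ℝ 3 f) (hg : ContDiff ℝ 3 g) (hh : ContDiff ℝ 3 h)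
    (hfne2 : ∀ u, deriv (deriv f) u ≠ 0) (hgne2 : ∀ v, deriv (deriv g) v ≠ 0)
    (hhne2 : ∀ w, deriv (deriv h) w ≠ 0)
    (hhne3 : ∀ w, deriv (deriv (deriv h)) w ≠ 0)
    (hfg : ∀ u v, deriv f u - deriv g v ≠ 0)
    (heq : ∀ u v w : ℝ,
      2 * deriv h w * deriv (deriv h) w * (deriv (deriv f) u + deriv (deriv g) v)
        - 5 * deriv (deriv h) w
            * (deriv (deriv f) u * deriv g v + deriv f u * deriv (deriv g) v)
        + deriv (deriv (deriv h)) w * (deriv f u - deriv g v) ^ 2 = 0) :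
    False := by
  set F1 := deriv f with hF1
  set G1 := deriv g with hG1
  set F2 := deriv (deriv f) with hF2
  set G2 := deriv (deriv g) with hG2
  set Dh := deriv h with hDh
  set D2h := deriv (deriv h) with hD2h
  set D3h := deriv (deriv (deriv h)) with hD3h
  obtain ⟨w1, w2, hw⟩ : ∃ a b : ℝ, Dh a ≠ Dh b := nonconst_of_deriv_ne (deriv h) (hhne2 0)
  obtain ⟨u1, u2, hu⟩ : ∃ a b : ℝ, F1 a ≠ F1 b := nonconst_of_deriv_ne (deriv f) (hfne2 0)
  obtain ⟨v1, v2, hv⟩ : ∃ a b : ℝ, G1 a ≠ G1 b := nonconst_of_deriv_ne (deriv g) (hgne2 0)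
  have hc00 : (F1 0 - G1 0) ^ 2 ≠ 0 := pow_ne_zero 2 (hfg 0 0)
  -- Step 1: proportionality relations
  have key : ∀ u v : ℝ,
      (F2 u + G2 v) * (F1 0 - G1 0) ^ 2 = (F2 0 + G2 0) * (F1 u - G1 v) ^ 2 ∧
      (F2 u * G1 v + F1 u * G2 v) * (F1 0 - G1 0) ^ 2
        = (F2 0 * G1 0 + F1 0 * G2 0) * (F1 u - G1 v) ^ 2 := by
    intro u v
    have e1 := heq u v w1
    have e2 := heq 0 0 w1
    have e3 := heq u v w2
    have e4 := heq 0 0 w2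
    set A := (F2 u + G2 v) * (F1 0 - G1 0) ^ 2 - (F2 0 + G2 0) * (F1 u - G1 v) ^ 2 with hA
    set B := (F2 u * G1 v + F1 u * G2 v) * (F1 0 - G1 0) ^ 2
        - (F2 0 * G1 0 + F1 0 * G2 0) * (F1 u - G1 v) ^ 2 with hB
    have h12 : D2h w1 * (2 * Dh w1 * A - 5 * B) = 0 := by
      rw [hA, hB]
      linear_combination (F1 0 - G1 0) ^ 2 * e1 - (F1 u - G1 v) ^ 2 * e2
    have h34 : D2h w2 * (2 * Dh w2 * A - 5 * B) = 0 := by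
      rw [hA, hB]
      linear_combination (F1 0 - G1 0) ^ 2 * e3 - (F1 u - G1 v) ^ 2 * e4
    have r1 : 2 * Dh w1 * A - 5 * B = 0 := (mul_eq_zero.mp h12).resolve_left (hhne2 w1)
    have r2 : 2 * Dh w2 * A - 5 * B = 0 := (mul_eq_zero.mp h34).resolve_left (hhne2 w2)
    have hdiff : (2 * (Dh w1 - Dh w2)) * A = 0 := by linear_combination r1 - r2
    have h2ne : (2 : ℝ) * (Dh w1 - Dh w2) ≠ 0 :=
      mul_ne_zero two_ne_zero (sub_ne_zero.mpr hw)
    have hA0 : A = 0 := (mul_eq_zero.mp hdiff).resolve_left h2ne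
    have hB0 : B = 0 := by
      linear_combination (-(1 : ℝ) / 5) * r1 + (2 * Dh w1 / 5) * hA0
    rw [hA] at hA0
    rw [hB] at hB0
    constructor
    · linarith
    · linarith
  -- Step 2: the coefficient (F2 0 + G2 0) vanishes
  have ha00 : F2 0 + G2 0 = 0 := by
    have e11 := (key u1 v1).1
    have e12 := (key u1 v2).1
    have e21 := (key u2 v1).1
    have e22 := (key u2 v2).1
    have hcomb : (F2 0 + G2 0) * (2 * (F1 u1 - F1 u2) * (G1 v2 - G1 v1)) = 0 := by
      linear_combination -(e11 - e12 - e21 + e22)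
    have hne : 2 * (F1 u1 - F1 u2) * (G1 v2 - G1 v1) ≠ 0 :=
      mul_ne_zero (mul_ne_zero two_ne_zero (sub_ne_zero.mpr hu))
        (sub_ne_zero.mpr (Ne.symm hv))
    exact (mul_eq_zero.mp hcomb).resolve_right hne
  -- Hence F2 u + G2 v = 0 for all u, v
  have hzero : ∀ u v : ℝ, F2 u + G2 v = 0 := by
    intro u v
    have e := (key u v).1
    rw [ha00, zero_mul] at e
    exact (mul_eq_zero.mp e).resolve_right hc00
  -- Step 3: F2 is the constant k, G2 is the constant -k
  set k := F2 0 with hk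
  have hkne : k ≠ 0 := hfne2 0
  have hFk : ∀ u, F2 u = k := by
    intro u
    have h1 := hzero u 0
    have h2 := hzero 0 0
    linarith
  have hGk : ∀ v, G2 v = -k := by
    intro v
    have h1 := hzero 0 v
    linarith
  -- Step 4: the second proportionality relation forces k = 0
  have e1 := (key u1 0).2
  have e2 := (key u2 0).2
  rw [hFk u1, hGk 0] at e1
  rw [hFk u2, hGk 0] at e2
  set t0 := F1 0 - G1 0 with ht0
  set t1 := F1 u1 - G1 0 with ht1
  set t2 := F1 u2 - G1 0 with ht2
  have ht1ne : t1 ≠ 0 := hfg u1 0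
  have ht2ne : t2 ≠ 0 := hfg u2 0
  have ht0ne : t0 ≠ 0 := hfg 0 0
  -- e1 : (k * G1 0 + F1 u1 * (-k)) * t0 ^ 2 = (k * G1 0 + F1 0 * (-k)) * t1 ^ 2
  -- i.e. -k * t1 * t0^2 = -k * t0 * t1^2
  have e1' : k * t1 * t0 * (t0 - t1) = 0 := by
    rw [ht0, ht1]
    linear_combination -e1
  have e2' : k * t2 * t0 * (t0 - t2) = 0 := by
    rw [ht0, ht2]
    linear_combination -e2
  have hkt0 : k * t0 ≠ 0 := mul_ne_zero hkne ht0ne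
  have h1 : t1 * (t0 - t1) = 0 := by
    have : (k * t0) * (t1 * (t0 - t1)) = 0 := by linear_combination e1'
    exact (mul_eq_zero.mp this).resolve_left hkt0
  have h2 : t2 * (t0 - t2) = 0 := by
    have : (k * t0) * (t2 * (t0 - t2)) = 0 := by linear_combination e2'
    exact (mul_eq_zero.mp this).resolve_left hkt0
  have ht1eq : t1 = t0 := by
    rcases mul_eq_zero.mp h1 with h | h
    · exact absurd h ht1ne
    · linarith
  have ht2eq : t2 = t0 := by
    rcases mul_eq_zero.mp h2 with h | h
    · exact absurd h ht2ne
    · linarith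
  apply hu
  rw [hF1]
  have : t1 = t2 := by rw [ht1eq, ht2eq]
  rw [ht1, ht2] at this
  linarith
end

section
/- Let f, g : ℝ → ℝ be twice differentiable, with f three times differentiable and f'' never zero, and g'' never zero, and let μ ≠ 0. Then there are no such f, g satisfying f''(u) + g''(v) = μ·(f'(u) - g'(v))² for all u, v. -/
/-- Appendix 2 functional identity: f''(u) + g''(v) = μ(f'(u) - g'(v))² with
f'', g'' nonvanishing and μ ≠ 0 is impossible. -/
theorem stmt_18 (f g : ℝ → ℝ) (μ : ℝ) (hμ : μ ≠ 0)
    (hf : Differentiable ℝ f) (hf' : Differentiable ℝ (deriv f))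
    (hf'' : Differentiable ℝ (deriv (deriv f)))
    (hg : Differentiable ℝ g) (hg' : Differentiable ℝ (deriv g))
    (hfne2 : ∀ u, deriv (deriv f) u ≠ 0) (hgne2 : ∀ v, deriv (deriv g) v ≠ 0)
    (heq : ∀ u v : ℝ,
      deriv (deriv f) u + deriv (deriv g) v = μ * (deriv f u - deriv g v) ^ 2) :
    False := by
  -- For each v, f''(u) = μ(f'(u) - g'(v))² - g''(v), so the third derivative of f
  -- at 0 equals 2μ(f'(0) - g'(v))·f''(0).
  have key : ∀ v : ℝ, deriv (deriv (deriv f)) 0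
      = 2 * μ * (deriv f 0 - deriv g v) * deriv (deriv f) 0 := by
    intro v
    have hfun : deriv (deriv f) = fun u =>
        μ * (deriv f u - deriv g v) ^ 2 - deriv (deriv g) v := by
      funext u
      have := heq u v
      linarith
    have hD : HasDerivAt (fun u => μ * (deriv f u - deriv g v) ^ 2 - deriv (deriv g) v)
        (2 * μ * (deriv f 0 - deriv g v) * deriv (deriv f) 0) 0 := by
      have h1 : HasDerivAt (fun u => deriv f u - deriv g v) (deriv (deriv f) 0) 0 :=
        ((hf' 0).hasDerivAt).sub_const _
      have h2 : HasDerivAt (fun u => μ * (deriv f u - deriv g v) ^ 2 - deriv (deriv g) v)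
          (μ * ((2 : ℕ) * (deriv f 0 - deriv g v) ^ (2 - 1) * deriv (deriv f) 0)) 0 :=
        ((h1.pow 2).const_mul μ).sub_const (deriv (deriv g) v)
      convert h2 using 1
      ring
    calc deriv (deriv (deriv f)) 0
        = deriv (fun u => μ * (deriv f u - deriv g v) ^ 2 - deriv (deriv g) v) 0 := by
          rw [← hfun]
      _ = 2 * μ * (deriv f 0 - deriv g v) * deriv (deriv f) 0 := hD.deriv
  -- Comparing v with 0 forces g' to be constant.
  have hconst : ∀ v : ℝ, deriv g v = deriv g 0 := by
    intro v
    have h := (key v).symm.trans (key 0)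
    have h2 : (deriv g 0 - deriv g v) * (2 * μ * deriv (deriv f) 0) = 0 := by ring_nf; linarith
    have h3 : 2 * μ * deriv (deriv f) 0 ≠ 0 := by
      have := hfne2 0
      positivity
    have := mul_eq_zero.mp h2
    rcases this with h4 | h4
    · linarith
    · exact absurd h4 h3
  -- Then g'' ≡ 0, contradicting hgne2.
  have : deriv (deriv g) 0 = 0 := by
    have : deriv g = fun _ => deriv g 0 := funext hconst
    rw [this, deriv_const]
  exact hgne2 0 this
end
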